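/- arXiv:1704.04342 — 2 statements merged into one kernel-verified Lean document; each statement's English description precedes it below -/
import Mathlib

section
/- Let ξ be an ℝ^m-valued random vector with law P, let ε, δ ∈ (0,1), let g = (g_j)_{j=1,…,l} with each g_j(x;·) : ℝ^m → ℝ measurable, b ∈ ℝ^l, and k ∈ ℝ^l with k_j > 0 for all j. Let x̂ ∈ ℝ^d be given, let T(ξ) = max_j (g_j(x̂;ξ) − b_j)/k_j, and let q_{1−ε} = inf{t ∈ ℝ : P(T(ξ) ≤ t) ≥ 1−ε}. Let (Ω₂, ℱ₂, P₂) be a probability space (modeling independent Phase 2 data) and let ρ : Ω₂ → ℝ be measurable with P₂(q_{1−ε} ≤ ρ) ≥ 1−δ (a 1−δ confidence upper bound for q_{1−ε}). Let x : Ω₂ → ℝ^d be a map such that for every ω, x(ω) satisfies g_j(x(ω);z) ≤ b_j for all j and every z ∈ ℝ^m with g_j(x̂;z) ≤ b_j + ρ(ω) k_j for all j, and assume ω ↦ P(g_j(x(ω);ξ) ≤ b_j for all j) is measurable. Then P₂( P(g_j(x(ω);ξ) ≤ b_j for all j) ≥ 1−ε ) ≥ 1−δ; i.e., any feasible solution of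 the reconstructed RO calibrated at confidence 1−δ is feasible for the chance constraint with the same confidence. -/
open MeasureTheory

/-- feasibility guarantee for reconstruction under statistical confidence:
if `ρ` is a `1-δ` confidence upper bound (over Phase 2 data) for the `(1-ε)`-quantile of
`max_j (g_j(x̂;ξ)−b_j)/k_j`, then any feasible solution of the reconstructed RO is feasible
for the joint chance constraint with confidence `1-δ`. -/
theorem reconstruction_feasibility_confidence
    {m d l : ℕ} (hl : 0 < l)
    {Ω Ω₂ : Type*} [MeasurableSpace Ω] [MeasurableSpace Ω₂]
    (P : Measure Ω) [IsProbabilityMeasure P]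
    (P₂ : Measure Ω₂) [IsProbabilityMeasure P₂]
    (ξ : Ω → (Fin m → ℝ)) (hξ : Measurable ξ)
    (ε δ : ℝ) (hε : ε ∈ Set.Ioo (0 : ℝ) 1) (hδ : δ ∈ Set.Ioo (0 : ℝ) 1)
    (g : (Fin d → ℝ) → (Fin m → ℝ) → Fin l → ℝ)
    (hg : ∀ (x : Fin d → ℝ) (j : Fin l), Measurable fun z => g x z j)
    (b k : Fin l → ℝ) (hk : ∀ j, 0 < k j)
    (xhat : Fin d → ℝ)
    (q : ℝ)
    (hq : q = sInf {t : ℝ | ENNReal.ofReal (1 - ε) ≤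
      P {ω | (⨆ j : Fin l, (g xhat (ξ ω) j - b j) / k j) ≤ t}})
    (ρ : Ω₂ → ℝ) (hρmeas : Measurable ρ)
    (hρ : ENNReal.ofReal (1 - δ) ≤ P₂ {ω₂ | q ≤ ρ ω₂})
    (x : Ω₂ → (Fin d → ℝ))
    (hfeas : ∀ ω₂ : Ω₂, ∀ z : Fin m → ℝ,
      (∀ j, g xhat z j ≤ b j + ρ ω₂ * k j) → ∀ j, g (x ω₂) z j ≤ b j)
    (hmeas : Measurable fun ω₂ : Ω₂ => P {ω | ∀ j, g (x ω₂) (ξ ω) j ≤ b j}) :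
    ENNReal.ofReal (1 - δ) ≤
      P₂ {ω₂ | ENNReal.ofReal (1 - ε) ≤ P {ω | ∀ j, g (x ω₂) (ξ ω) j ≤ b j}} := by
  haveI : Nonempty (Fin l) := ⟨⟨0, hl⟩⟩
  set T : Ω → ℝ := fun ω => ⨆ j : Fin l, (g xhat (ξ ω) j - b j) / k j with hT
  set S : Set ℝ := {t : ℝ | ENNReal.ofReal (1 - ε) ≤ P {ω | T ω ≤ t}} with hS
  have hset : ∀ t : ℝ, {ω | T ω ≤ t} = ⋂ j : Fin l, {ω | (g xhat (ξ ω) j - b j) / k j ≤ t} := by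
    intro t
    ext ω
    simp only [Set.mem_setOf_eq, Set.mem_iInter, hT]
    exact ciSup_le_iff (Set.Finite.bddAbove (Set.finite_range _))
  have hTmeas : ∀ t : ℝ, MeasurableSet {ω | T ω ≤ t} := by
    intro t
    rw [hset]
    exact MeasurableSet.iInter fun j =>
      measurableSet_le ((((hg xhat j).comp hξ).sub measurable_const).div_const (k j))
        measurable_const
  have hmono : ∀ s t : ℝ, s ≤ t → P {ω | T ω ≤ s} ≤ P {ω | T ω ≤ t} := by
    intro s t hst
    exact measure_mono fun ω hω => le_trans hω hst
  -- S is nonempty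
  have hSne : S.Nonempty := by
    have hU : ⋃ n : ℕ, {ω | T ω ≤ (n : ℝ)} = Set.univ := by
      ext ω
      simp only [Set.mem_iUnion, Set.mem_setOf_eq, Set.mem_univ, iff_true]
      obtain ⟨n, hn⟩ := exists_nat_ge (T ω)
      exact ⟨n, hn⟩
    have htend : Filter.Tendsto (fun n : ℕ => P {ω | T ω ≤ (n : ℝ)}) Filter.atTop
        (nhds (P (⋃ n : ℕ, {ω | T ω ≤ (n : ℝ)}))) :=
      tendsto_measure_iUnion_atTop (fun a b hab ω hω => by
        simp only [Set.mem_setOf_eq] at hω ⊢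
        exact le_trans hω (by exact_mod_cast hab))
    rw [hU, measure_univ] at htend
    have hlt : ENNReal.ofReal (1 - ε) < 1 := by
      rw [← ENNReal.ofReal_one]
      exact ENNReal.ofReal_lt_ofReal_iff_of_nonneg (by linarith [hε.2]) |>.mpr
        (by linarith [hε.1])
    obtain ⟨n, hn⟩ := (htend.eventually (eventually_ge_nhds hlt)).exists
    exact ⟨n, hn⟩
  -- S is bounded below
  have hSbdd : BddBelow S := by
    have hI : ⋂ n : ℕ, {ω | T ω ≤ -(n : ℝ)} = ∅ := by
      ext ω
      simp only [Set.mem_iInter, Set.mem_setOf_eq, Set.mem_empty_iff_false, iff_false,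
        not_forall, not_le]
      obtain ⟨n, hn⟩ := exists_nat_gt (-(T ω))
      exact ⟨n, by linarith⟩
    have htend : Filter.Tendsto (fun n : ℕ => P {ω | T ω ≤ -(n : ℝ)}) Filter.atTop
        (nhds (P (⋂ n : ℕ, {ω | T ω ≤ -(n : ℝ)}))) := by
      refine tendsto_measure_iInter_atTop (fun n => (hTmeas _).nullMeasurableSet)
        (fun a b hab ω hω => by
          simp only [Set.mem_setOf_eq] at hω ⊢
          exact le_trans hω (neg_le_neg (by exact_mod_cast hab)))
        ⟨0, measure_ne_top _ _⟩
    rw [hI, measure_empty] at htend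
    have hpos : ENNReal.ofReal (1 - ε) ≠ 0 :=
      (ENNReal.ofReal_pos.mpr (by linarith [hε.2])).ne'
    obtain ⟨n, hn⟩ := (htend.eventually (eventually_lt_nhds (pos_iff_ne_zero.mpr hpos))).exists
    refine ⟨-(n : ℝ), fun s hs => ?_⟩
    by_contra hcon
    push_neg at hcon
    exact absurd (le_trans hs (hmono _ _ hcon.le)) (not_le.mpr hn)
  -- key: q ≤ t implies 1-ε ≤ P{T ≤ t}
  have key : ∀ t : ℝ, q ≤ t → ENNReal.ofReal (1 - ε) ≤ P {ω | T ω ≤ t} := by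
    intro t ht
    have hIt : {ω | T ω ≤ t} = ⋂ n : ℕ, {ω | T ω ≤ t + 1 / ((n : ℝ) + 1)} := by
      ext ω
      simp only [Set.mem_setOf_eq, Set.mem_iInter]
      constructor
      · intro h n
        have : (0 : ℝ) < 1 / ((n : ℝ) + 1) := by positivity
        linarith
      · intro h
        by_contra hcon
        push_neg at hcon
        obtain ⟨n, hn⟩ := exists_nat_one_div_lt (by linarith : (0 : ℝ) < T ω - t)
        exact absurd (h n) (not_le.mpr (by linarith))
    have htend : Filter.Tendsto (fun n : ℕ => P {ω | T ω ≤ t + 1 / ((n : ℝ) + 1)})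
        Filter.atTop (nhds (P {ω | T ω ≤ t})) := by
      rw [hIt]
      refine tendsto_measure_iInter_atTop (fun n => (hTmeas _).nullMeasurableSet)
        (fun a b hab ω hω => ?_) ⟨0, measure_ne_top _ _⟩
      simp only [Set.mem_setOf_eq] at hω ⊢
      refine le_trans hω ?_
      have h1 : (1 : ℝ) / ((b : ℝ) + 1) ≤ 1 / ((a : ℝ) + 1) := by
        apply one_div_le_one_div_of_le (by positivity)
        have : (a : ℝ) ≤ (b : ℝ) := Nat.cast_le.mpr hab
        linarith
      linarith
    refine ge_of_tendsto htend (Filter.Eventually.of_forall fun n => ?_)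
    have hlt : sInf S < t + 1 / ((n : ℝ) + 1) := by
      have : (0 : ℝ) < 1 / ((n : ℝ) + 1) := by positivity
      calc sInf S = q := hq.symm
        _ < t + 1 / ((n : ℝ) + 1) := by linarith
    obtain ⟨s, hsS, hst⟩ := exists_lt_of_csInf_lt hSne hlt
    exact le_trans hsS (hmono _ _ hst.le)
  -- conclude
  refine le_trans hρ (measure_mono fun ω₂ hω₂ => ?_)
  simp only [Set.mem_setOf_eq] at hω₂ ⊢
  refine le_trans (key (ρ ω₂) hω₂) (measure_mono fun ω hω => ?_)
  simp only [Set.mem_setOf_eq] at hω ⊢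
  refine hfeas ω₂ (ξ ω) (fun j => ?_)
  have hj : (g xhat (ξ ω) j - b j) / k j ≤ ρ ω₂ :=
    le_trans (le_ciSup (Set.Finite.bddAbove
      (Set.finite_range fun i => (g xhat (ξ ω) i - b i) / k i)) j) hω
  have := (div_le_iff₀ (hk j)).mp hj
  linarith
end

section
/- Let ξ be an ℝ^m-valued random vector with law P, let ε, δ ∈ (0,1), let g = (g_j)_{j=1,…,l} with each g_j(x;·) : ℝ^m → ℝ measurable, b ∈ ℝ^l, k ∈ ℝ^l with k_j > 0 for all j, and f : ℝ^d → ℝ. Let x̂ ∈ ℝ^d be given, let q_{1−ε} be the (1−ε)-quantile of max_j (g_j(x̂;ξ) − b_j)/k_j, and let ρ : Ω₂ → ℝ (on a probability space (Ω₂,ℱ₂,P₂) modeling Phase 2 data) satisfy P₂(q_{1−ε} ≤ ρ) ≥ 1−δ. Let x̃ : Ω₂ → ℝ^d be such that for each ω, x̃(ω) is an optimal solution of the reconstructed robust problem: minimize f(x) subject to 'g_j(x;z) ≤ b_j for all j, for every z with g_j(x̂;z) ≤ b_j + ρ(ω) k_j for all j' (assuming measurability of ω ↦ P(g_j(x̃(ω);ξ)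 ≤ b_j for all j)). Then: (a) P₂( P(g_j(x̃(ω);ξ) ≤ b_j for all j) ≥ 1−ε ) ≥ 1−δ; and (b) for every ω with ρ(ω) ≤ 0, x̂ is feasible for the reconstructed robust problem and hence f(x̃(ω)) ≤ f(x̂). -/
/-!
The `(1-ε)`-quantile `q` of `T = maxⱼ (gⱼ(x̂;ξ) - bⱼ)/kⱼ` is attained, `P (T ≤ q) ≥ 1 - ε`, because
distribution functions are right-continuous. On `{T ≤ ρ(ω)}` the sample `ξ` lies in the
reconstructed uncertainty set, where `x̃(ω)` is robustly feasible; so whenever `q ≤ ρ(ω)`, an event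
of `P₂`-probability at least `1 - δ`, the solution `x̃(ω)` satisfies the chance constraint.
If `ρ(ω) ≤ 0` the uncertainty set lies inside the feasibility region of `x̂`, so `x̂` competes in
the robust problem and `f(x̃(ω)) ≤ f(x̂)`.
-/

open MeasureTheory ProbabilityTheory Filter Set Topology

namespace StieltjesFunction

theorem le_apply_sInf_setOf_le (f : StieltjesFunction ℝ) {c : ℝ}
    (hne : {t | c ≤ f t}.Nonempty) (hbdd : BddBelow {t | c ≤ f t}) :
    c ≤ f (sInf {t | c ≤ f t}) := by
  set a := sInf {t | c ≤ f t}
  have hright : Tendsto f (𝓝[>] a) (𝓝 (f a)) :=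
    (f.right_continuous a).mono Ioi_subset_Ici_self
  refine ge_of_tendsto hright (eventually_nhdsWithin_of_forall fun t (ht : a < t) => ?_)
  obtain ⟨s, hs, hst⟩ := (csInf_lt_iff hbdd hne).mp ht
  exact hs.trans (f.mono hst.le)

end StieltjesFunction

theorem ProbabilityTheory.le_cdf_sInf_setOf_le (μ : Measure ℝ) [IsProbabilityMeasure μ] {c : ℝ}
    (hc : c ∈ Ioo (0 : ℝ) 1) :
    c ≤ cdf μ (sInf {t | c ≤ cdf μ t}) := by
  refine (cdf μ).le_apply_sInf_setOf_le ?_ ?_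
  · exact ((tendsto_cdf_atTop μ).eventually (eventually_ge_nhds hc.2)).exists
  · obtain ⟨s, hs⟩ := ((tendsto_cdf_atBot μ).eventually (eventually_lt_nhds hc.1)).exists
    refine ⟨s, fun t (ht : c ≤ cdf μ t) => ?_⟩
    by_contra! hts
    exact (ht.trans ((cdf μ).mono hts.le)).not_gt hs

/-- Junk value `0` when the set is empty or unbounded below, which cannot happen for `0 < p < 1`. -/
noncomputable def quantile {Ω : Type*} [MeasurableSpace Ω] (P : Measure Ω) (T : Ω → ℝ) (p : ℝ) :
    ℝ :=
  sInf {t | ENNReal.ofReal p ≤ P {ω | T ω ≤ t}}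

theorem ofReal_le_measure_le_quantile {Ω : Type*} [MeasurableSpace Ω] (P : Measure Ω)
    [IsProbabilityMeasure P] {T : Ω → ℝ} (hT : AEMeasurable T P) {p : ℝ}
    (hp : p ∈ Ioo (0 : ℝ) 1) :
    ENNReal.ofReal p ≤ P {ω | T ω ≤ quantile P T p} := by
  have := Measure.isProbabilityMeasure_map hT
  have hcdf : ∀ t, P {ω | T ω ≤ t} = ENNReal.ofReal (cdf (P.map T) t) := fun t => by
    rw [ofReal_cdf, Measure.map_apply_of_aemeasurable hT measurableSet_Iic]
    rfl
  simp only [quantile, hcdf, ENNReal.ofReal_le_ofReal_iff (cdf_nonneg _ _)]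
  exact le_cdf_sInf_setOf_le _ hp

theorem le_add_mul_of_iSup_sub_div_le {ι : Type*} [Finite ι] {u b k : ι → ℝ}
    (hk : ∀ j, 0 < k j) {t : ℝ} (h : ⨆ j, (u j - b j) / k j ≤ t) (j : ι) :
    u j ≤ b j + t * k j := by
  have := (div_le_iff₀ (hk j)).mp ((le_ciSup (Finite.bddAbove_range _) j).trans h)
  linarith

theorem reconstruction_improvement_confidence_general
    {m d l : ℕ}
    {Ω Ω₂ : Type*} [MeasurableSpace Ω] [MeasurableSpace Ω₂]
    (P : Measure Ω) [IsProbabilityMeasure P]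
    (P₂ : Measure Ω₂)
    (ξ : Ω → (Fin m → ℝ)) (hξ : Measurable ξ)
    (ε δ : ℝ) (hε : ε ∈ Set.Ioo (0 : ℝ) 1)
    (g : (Fin d → ℝ) → (Fin m → ℝ) → Fin l → ℝ)
    (hg : ∀ (x : Fin d → ℝ) (j : Fin l), Measurable fun z => g x z j)
    (b k : Fin l → ℝ) (hk : ∀ j, 0 < k j)
    (f : (Fin d → ℝ) → ℝ)
    (xhat : Fin d → ℝ)
    (q : ℝ)
    (hq : q = sInf {t : ℝ | ENNReal.ofReal (1 - ε) ≤
      P {ω | (⨆ j : Fin l, (g xhat (ξ ω) j - b j) / k j) ≤ t}})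
    (ρ : Ω₂ → ℝ)
    (hρ : ENNReal.ofReal (1 - δ) ≤ P₂ {ω₂ | q ≤ ρ ω₂})
    (xtilde : Ω₂ → (Fin d → ℝ))
    (hopt : ∀ ω₂ : Ω₂,
      (∀ z : Fin m → ℝ,
        (∀ j, g xhat z j ≤ b j + ρ ω₂ * k j) → ∀ j, g (xtilde ω₂) z j ≤ b j) ∧
      (∀ x : Fin d → ℝ,
        (∀ z : Fin m → ℝ,
          (∀ j, g xhat z j ≤ b j + ρ ω₂ * k j) → ∀ j, g x z j ≤ b j) →
        f (xtilde ω₂) ≤ f x)) :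
    (ENNReal.ofReal (1 - δ) ≤
      P₂ {ω₂ | ENNReal.ofReal (1 - ε) ≤ P {ω | ∀ j, g (xtilde ω₂) (ξ ω) j ≤ b j}}) ∧
    (∀ ω₂ : Ω₂, ρ ω₂ ≤ 0 →
      (∀ z : Fin m → ℝ,
        (∀ j, g xhat z j ≤ b j + ρ ω₂ * k j) → ∀ j, g xhat z j ≤ b j) ∧
      f (xtilde ω₂) ≤ f xhat) := by
  set T : Ω → ℝ := fun ω => ⨆ j : Fin l, (g xhat (ξ ω) j - b j) / k j
  have hT : Measurable T :=
    Measurable.iSup fun j => (((hg xhat j).comp hξ).sub_const _).div_const _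
  have hq_attained : ENNReal.ofReal (1 - ε) ≤ P {ω | T ω ≤ q} :=
    hq ▸ ofReal_le_measure_le_quantile P hT.aemeasurable ⟨by linarith [hε.2], by linarith [hε.1]⟩
  refine ⟨hρ.trans (measure_mono fun ω₂ (hqρ : q ≤ ρ ω₂) => ?_), fun ω₂ hρ0 => ?_⟩
  · refine hq_attained.trans (measure_mono fun ω (hω : T ω ≤ q) => ?_)
    exact (hopt ω₂).1 (ξ ω) (le_add_mul_of_iSup_sub_div_le hk (hω.trans hqρ))
  · have hxhat : ∀ z : Fin m → ℝ,
        (∀ j, g xhat z j ≤ b j + ρ ω₂ * k j) → ∀ j, g xhat z j ≤ b j := fun z hz j =>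
      (hz j).trans (add_le_of_nonpos_right (mul_nonpos_of_nonpos_of_nonneg hρ0 (hk j).le))
    exact ⟨hxhat, (hopt ω₂).2 xhat hxhat⟩

/-- improvement from reconstruction under statistical confidence: if `ρ` is
a `1-δ` confidence upper bound for the `(1-ε)`-quantile of `max_j (g_j(x̂;ξ)−b_j)/k_j` and
`x̃(ω)` is an optimal solution of the reconstructed robust problem for each Phase 2
realization `ω`, then (a) `x̃` is chance-feasible with confidence `1-δ`, and (b) whenever
`ρ(ω) ≤ 0`, `x̂` is feasible for the reconstructed robust problem and `f(x̃(ω)) ≤ f(x̂)`. -/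
theorem reconstruction_improvement_confidence
    {m d l : ℕ} (hl : 0 < l)
    {Ω Ω₂ : Type*} [MeasurableSpace Ω] [MeasurableSpace Ω₂]
    (P : Measure Ω) [IsProbabilityMeasure P]
    (P₂ : Measure Ω₂) [IsProbabilityMeasure P₂]
    (ξ : Ω → (Fin m → ℝ)) (hξ : Measurable ξ)
    (ε δ : ℝ) (hε : ε ∈ Set.Ioo (0 : ℝ) 1) (hδ : δ ∈ Set.Ioo (0 : ℝ) 1)
    (g : (Fin d → ℝ) → (Fin m → ℝ) → Fin l → ℝ)
    (hg : ∀ (x : Fin d → ℝ) (j : Fin l), Measurable fun z => g x z j)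
    (b k : Fin l → ℝ) (hk : ∀ j, 0 < k j)
    (f : (Fin d → ℝ) → ℝ)
    (xhat : Fin d → ℝ)
    (q : ℝ)
    (hq : q = sInf {t : ℝ | ENNReal.ofReal (1 - ε) ≤
      P {ω | (⨆ j : Fin l, (g xhat (ξ ω) j - b j) / k j) ≤ t}})
    (ρ : Ω₂ → ℝ) (hρmeas : Measurable ρ)
    (hρ : ENNReal.ofReal (1 - δ) ≤ P₂ {ω₂ | q ≤ ρ ω₂})
    (xtilde : Ω₂ → (Fin d → ℝ))
    (hopt : ∀ ω₂ : Ω₂,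
      (∀ z : Fin m → ℝ,
        (∀ j, g xhat z j ≤ b j + ρ ω₂ * k j) → ∀ j, g (xtilde ω₂) z j ≤ b j) ∧
      (∀ x : Fin d → ℝ,
        (∀ z : Fin m → ℝ,
          (∀ j, g xhat z j ≤ b j + ρ ω₂ * k j) → ∀ j, g x z j ≤ b j) →
        f (xtilde ω₂) ≤ f x))
    (hmeas : Measurable fun ω₂ : Ω₂ => P {ω | ∀ j, g (xtilde ω₂) (ξ ω) j ≤ b j}) :
    (ENNReal.ofReal (1 - δ) ≤
      P₂ {ω₂ | ENNReal.ofReal (1 - ε) ≤ P {ω | ∀ j, g (xtilde ω₂) (ξ ω) j ≤ b j}}) ∧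
    (∀ ω₂ : Ω₂, ρ ω₂ ≤ 0 →
      (∀ z : Fin m → ℝ,
        (∀ j, g xhat z j ≤ b j + ρ ω₂ * k j) → ∀ j, g xhat z j ≤ b j) ∧
      f (xtilde ω₂) ≤ f xhat) :=
  reconstruction_improvement_confidence_general P P₂ ξ hξ ε δ hε g hg b k hk f xhat q hq ρ hρ xtilde
    hopt
end
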